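/- arXiv:1001.3708 — 5 statements merged into one kernel-verified Lean document; each statement's English description precedes it below -/
import Mathlib

section
/- The gap C_UB(s) − C_Latt(s) tends to log₂(3)/4 as s → ∞, where C_UB(s) = log₂(1+s)·log₂(1+3s)/(log₂(1+s)+log₂(1+3s)) and C_Latt(s) = log₂(1+s)·log₂(1/3+s)/(log₂(1+s)+log₂(1/3+s)). -/
open Real Filter

/-!
Write `a = log₂(1+s)` and `c = log₂(1/3+s)`; then `log₂(1+3s) = log₂ 3 + c` exactly, and
`ab/(a+b) - ac/(a+c) = a²(b-c)/((a+b)(a+c)) = (b-c)/((1+b/a)(1+c/a))`.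
Since `a → ∞` while `a - c → 0`, both `b/a` and `c/a` tend to `1`, so the gap tends to `log₂ 3 / 4`.
-/

theorem Filter.Tendsto.div_nhds_one_of_tendsto_sub {α : Type*} {l : Filter α} {f g : α → ℝ} {L : ℝ}
    (hg : Tendsto g l atTop) (hfg : Tendsto (fun x => f x - g x) l (nhds L)) :
    Tendsto (fun x => f x / g x) l (nhds 1) := by
  have hquot : Tendsto (fun x => 1 + (f x - g x) / g x) l (nhds (1 + 0)) :=
    tendsto_const_nhds.add (hfg.div_atTop hg)
  rw [add_zero] at hquot
  refine hquot.congr' ?_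
  filter_upwards [hg.eventually_ne_atTop 0] with x hx
  field_simp
  ring

theorem Real.tendsto_logb_add_sub_logb_add (B y z : ℝ) :
    Tendsto (fun x : ℝ => logb B (x + y) - logb B (x + z)) atTop (nhds 0) := by
  have hlog : Tendsto (fun x : ℝ => (log (x + y) - log x) - (log (x + z) - log x))
      atTop (nhds (0 - 0)) :=
    (tendsto_log_comp_add_sub_log y).sub (tendsto_log_comp_add_sub_log z)
  rw [sub_zero] at hlog
  simpa [logb, ← sub_div] using hlog.div_const (log B)

theorem mul_div_add_sub_mul_div_add {a b c : ℝ} (ha : a ≠ 0) (hab : a + b ≠ 0)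
    (hac : a + c ≠ 0) :
    a * b / (a + b) - a * c / (a + c) = (b - c) / ((1 + b / a) * (1 + c / a)) := by
  field_simp
  ring

theorem tendsto_mul_div_add_sub_mul_div_add {α : Type*} {l : Filter α} {a b c : α → ℝ} {L : ℝ}
    (ha : Tendsto a l atTop) (hca : Tendsto (fun x => c x / a x) l (nhds 1))
    (hbc : ∀ᶠ x in l, b x = L + c x) :
    Tendsto (fun x => a x * b x / (a x + b x) - a x * c x / (a x + c x)) l (nhds (L / 4)) := by
  have hba : Tendsto (fun x => b x / a x) l (nhds 1) := by
    have hsum : Tendsto (fun x => L / a x + c x / a x) l (nhds (0 + 1)) :=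
      (tendsto_const_nhds.div_atTop ha).add hca
    rw [zero_add] at hsum
    refine hsum.congr' ?_
    filter_upwards [hbc] with x hb
    rw [hb, add_div]
  have hden : Tendsto (fun x => (1 + b x / a x) * (1 + c x / a x)) l (nhds 4) := by
    convert (tendsto_const_nhds.add hba).mul (tendsto_const_nhds.add hca) using 2
    norm_num
  have hlim : Tendsto (fun x => L / ((1 + b x / a x) * (1 + c x / a x))) l (nhds (L / 4)) :=
    tendsto_const_nhds.div hden four_ne_zero
  refine hlim.congr' ?_
  filter_upwards [hbc, ha.eventually_gt_atTop 0, hba.eventually (lt_mem_nhds one_pos),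
    hca.eventually (lt_mem_nhds one_pos)] with x hb ha_pos hb_pos hc_pos
  rw [div_pos_iff_of_pos_right ha_pos] at hb_pos hc_pos
  rw [mul_div_add_sub_mul_div_add ha_pos.ne' (by positivity) (by positivity), hb,
    add_sub_cancel_right]

theorem stmt6 :
    Tendsto (fun s : ℝ =>
      logb 2 (1 + s) * logb 2 (1 + 3 * s) / (logb 2 (1 + s) + logb 2 (1 + 3 * s)) -
      logb 2 (1 + s) * logb 2 (1 / 3 + s) / (logb 2 (1 + s) + logb 2 (1 / 3 + s)))
      atTop (nhds (logb 2 3 / 4)) := by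
  have hlog : Tendsto (fun s : ℝ => logb 2 (1 + s)) atTop atTop :=
    (tendsto_logb_atTop one_lt_two).comp (tendsto_atTop_add_const_left _ 1 tendsto_id)
  have hdiff : Tendsto (fun s : ℝ => logb 2 (1 / 3 + s) - logb 2 (1 + s)) atTop (nhds 0) := by
    simpa only [add_comm] using tendsto_logb_add_sub_logb_add 2 (1 / 3) 1
  refine tendsto_mul_div_add_sub_mul_div_add hlog (hlog.div_nhds_one_of_tendsto_sub hdiff) ?_
  filter_upwards [eventually_gt_atTop 0] with s hs
  rw [← logb_mul (by norm_num) (by positivity)]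
  ring_nf
end

section
/- For all s > 2/3, the gap C_UB(s) − C_Latt(s) is at most log₂(3)·log₂(5/3)/log₂(5), where C_UB(s) = log₂(1+s)·log₂(1+3s)/(log₂(1+s)+log₂(1+3s)) and C_Latt(s) = log₂(1+s)·log₂(1/3+s)/(log₂(1+s)+log₂(1/3+s)). -/
open Real

lemma key_alg (a c a0 L : ℝ) (ha : 0 < a) (hc : 0 < c) (ha0 : 0 < a0)
    (hL : 0 < L) (h1 : a ≤ a0 + c) (h2 : L ≤ 3 * a0) (h3 : a0 ≤ L) :
    a * (L + c) / (a + (L + c)) - a * c / (a + c) ≤ L * a0 / (L + a0) := by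
  have d1 : 0 < a + (L + c) := by linarith
  have d2 : 0 < a + c := by linarith
  have d3 : 0 < L + a0 := by linarith
  rw [div_sub_div _ _ d1.ne' d2.ne', div_le_div_iff₀ (by positivity) d3]
  nlinarith [mul_nonneg (mul_nonneg hL.le ha.le) (by linarith : (0:ℝ) ≤ a0 + c - a),
    mul_nonneg (mul_nonneg hc.le ha0.le) (by linarith : (0:ℝ) ≤ c + L - a),
    mul_nonneg (mul_nonneg hc.le ha.le) (by linarith : (0:ℝ) ≤ 3 * a0 - L)]

theorem stmt7 (s : ℝ) (hs : 2 / 3 < s) :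
    logb 2 (1 + s) * logb 2 (1 + 3 * s) / (logb 2 (1 + s) + logb 2 (1 + 3 * s)) -
    logb 2 (1 + s) * logb 2 (1 / 3 + s) / (logb 2 (1 + s) + logb 2 (1 / 3 + s)) ≤
    logb 2 3 * logb 2 (5 / 3) / logb 2 5 := by
  have e1 : (1 : ℝ) + 3 * s = 3 * (1 / 3 + s) := by ring
  have e2 : (5 : ℝ) = 3 * (5 / 3) := by norm_num
  have hc3 : (1:ℝ)/3 + s > 1 := by linarith
  have hb2 : (1:ℝ) < 2 := one_lt_two
  rw [e1, Real.logb_mul (by norm_num) (by linarith)]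
  rw [show logb 2 5 = logb 2 3 + logb 2 (5/3) by
    rw [← Real.logb_mul (by norm_num) (by norm_num)]; norm_num]
  set a := logb 2 (1 + s) with hadef
  set c := logb 2 (1 / 3 + s) with hcdef
  set L := logb 2 3 with hLdef
  set a0 := logb 2 (5 / 3) with ha0def
  have ha : 0 < a := Real.logb_pos hb2 (by linarith)
  have hc : 0 < c := Real.logb_pos hb2 hc3
  have hL : 0 < L := Real.logb_pos hb2 (by norm_num)
  have ha0 : 0 < a0 := Real.logb_pos hb2 (by norm_num)
  have h1 : a ≤ a0 + c := by
    have : (1:ℝ) + s ≤ (5/3) * (1/3 + s) := by linarith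
    calc a ≤ logb 2 ((5/3) * (1/3 + s)) :=
          Real.logb_le_logb_of_le (by norm_num : (1:ℝ) < 2) (by linarith) (by linarith)
      _ = a0 + c := Real.logb_mul (by norm_num) (by linarith)
  have h2 : L ≤ 3 * a0 := by
    have h : logb 2 3 ≤ logb 2 ((5/3)^3) := by
      exact Real.logb_le_logb_of_le (by norm_num : (1:ℝ) < 2) (by norm_num) (by norm_num)
    rw [Real.logb_pow] at h
    push_cast at h
    linarith
  have h3 : a0 ≤ L := Real.logb_le_logb_of_le (by norm_num : (1:ℝ) < 2) (by norm_num) (by norm_num)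
  have := key_alg a c a0 L ha hc ha0 hL h1 h2 h3
  linarith [this]
end

section
/- For every s > 2/3, the gap C_UB(s) − C_Latt(s) is bounded above by 1/2 + 1/100 (i.e., strictly less than 0.51 bits) uniformly in s. -/
open Real

lemma logb2_lt_div {x : ℝ} (hx : 0 < x) (m n : ℕ) (hn : 0 < (n:ℝ))
    (h : x ^ n < 2 ^ m) : Real.logb 2 x < m / n := by
  rw [Real.logb, div_lt_div_iff₀ (Real.log_pos one_lt_two) hn]
  have hlog := Real.log_lt_log (by positivity) h
  rw [Real.log_pow, Real.log_pow] at hlog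
  linarith

lemma div_lt_logb2 {x : ℝ} (hx : 0 < x) (m n : ℕ) (hn : 0 < (n:ℝ))
    (h : (2:ℝ) ^ m < x ^ n) : (m:ℝ) / n < Real.logb 2 x := by
  rw [Real.logb, div_lt_div_iff₀ hn (Real.log_pos one_lt_two)]
  have hlog := Real.log_lt_log (by positivity) h
  rw [Real.log_pow, Real.log_pow] at hlog
  linarith

set_option maxHeartbeats 1000000 in
theorem stmt8 (s : ℝ) (hs : 2 / 3 < s) :
    logb 2 (1 + s) * logb 2 (1 + 3 * s) / (logb 2 (1 + s) + logb 2 (1 + 3 * s)) -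
    logb 2 (1 + s) * logb 2 (1 / 3 + s) / (logb 2 (1 + s) + logb 2 (1 / 3 + s)) <
    1 / 2 + 1 / 100 := by
  set a := logb 2 (1 + s) with ha_def
  set c := logb 2 (1 / 3 + s) with hc_def
  set L := logb 2 3 with hL_def
  set D := logb 2 (5 / 3) with hD_def
  have hb : logb 2 (1 + 3 * s) = c + L := by
    have h1 : (1 + 3 * s) = (1 / 3 + s) * 3 := by ring
    rw [h1, Real.logb_mul (by linarith) (by norm_num)]
  have ha : 0 < a := Real.logb_pos one_lt_two (by linarith)
  have hc : 0 < c := Real.logb_pos one_lt_two (by linarith)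
  have hL : 0 < L := Real.logb_pos one_lt_two (by norm_num)
  have hD : 0 < D := Real.logb_pos one_lt_two (by norm_num)
  have hacD : a < c + D := by
    have h1 : c + D = logb 2 ((1 / 3 + s) * (5 / 3)) := by
      rw [Real.logb_mul (by linarith) (by norm_num)]
    rw [ha_def, h1]
    exact Real.logb_lt_logb one_lt_two (by linarith) (by linarith)
  have hDa : D < a := Real.logb_lt_logb one_lt_two (by norm_num) (by linarith)
  have hL1 : L < 27 / 17 := by
    have := logb2_lt_div (x := 3) (by norm_num) 27 17 (by norm_num) (by norm_num)
    simpa using this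
  have hL2 : (79:ℝ) / 50 < L := by
    have := div_lt_logb2 (x := 3) (by norm_num) 79 50 (by norm_num) (by norm_num)
    simpa using this
  have hD1 : D < 37 / 50 := by
    have := logb2_lt_div (x := 5/3) (by norm_num) 37 50 (by norm_num) (by norm_num)
    simpa using this
  have hD2 : (73:ℝ) / 100 < D := by
    have := div_lt_logb2 (x := 5/3) (by norm_num) 73 100 (by norm_num) (by norm_num)
    simpa using this
  rw [hb]
  have hden1 : 0 < a + (c + L) := by linarith
  have hden2 : 0 < a + c := by linarith
  have key : a * (c + L) / (a + (c + L)) - a * c / (a + c)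
      = a ^ 2 * L / ((a + c + L) * (a + c)) := by
    field_simp
    ring
  rw [key, div_lt_iff₀ (by positivity)]
  have step1 : 4 * a ^ 2 < (a + c + D) ^ 2 := by
    nlinarith [mul_pos (show (0:ℝ) < a + c + D - 2 * a by linarith)
      (show (0:ℝ) < a + c + D + 2 * a by linarith)]
  have step2 : (a + c + D) ^ 2 * (L + D) < 4 * D * (a + c) * (a + c + L) := by
    nlinarith [mul_pos (show (0:ℝ) < a + c - D by linarith)
      (show (0:ℝ) < (3 * D - L) * (a + c) + D * (D + L) by nlinarith)]
  have step3 : L * D < 51 / 100 * (L + D) := by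
    nlinarith [mul_pos (show (0:ℝ) < 27 / 17 - L by linarith)
      (show (0:ℝ) < 37 / 50 - D by linarith)]
  have hLD : (0:ℝ) < L + D := by linarith
  have A : 4 * a ^ 2 * (L * (L + D)) < (a + c + D) ^ 2 * (L * (L + D)) :=
    mul_lt_mul_of_pos_right step1 (mul_pos hL hLD)
  have B : (a + c + D) ^ 2 * (L + D) * L < 4 * D * (a + c) * (a + c + L) * L :=
    mul_lt_mul_of_pos_right step2 hL
  have C : L * D * (4 * (a + c) * (a + c + L)) <
      51 / 100 * (L + D) * (4 * (a + c) * (a + c + L)) :=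
    mul_lt_mul_of_pos_right step3 (by positivity)
  have key2 : a ^ 2 * L * (L + D) < (1 / 2 + 1 / 100) * ((a + c + L) * (a + c)) * (L + D) := by
    linarith [A, B, C]
  exact lt_of_mul_lt_mul_right key2 hLD.le
end

section
/- For all s > 0, the DF exchange rate constraints R ≤ min(Δ₁,Δ₂)·log₂(1+s), 2R ≤ Δ₁·log₂(1+2s), 3R ≤ Δ₁·log₂(1+3s), optimized over Δ₁ ∈ [0,1] with Δ₂ = 1−Δ₁, yield the maximum achievable symmetric rate log₂(1+s)·log₂(1+3s)/(3·log₂(1+s)+log₂(1+3s)). -/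
/-!
With `a = log₂(1+s)`, `b = log₂(1+2s)`, `c = log₂(1+3s)`, the binding constraints are
`R ≤ (1-Δ₁) a` and `3R ≤ Δ₁ c`; weighting them by `c` and `a` and adding eliminates `Δ₁` and
gives `R ≤ ac/(3a+c)`. Equality in both is reached at `Δ₁ = 3a/(3a+c)`, which is at least `1/2`
because `1+3s ≤ (1+s)³`, and the remaining constraint `2R ≤ Δ₁ b` holds there because
`(1+3s)² ≤ (1+2s)³`.
-/

open Real

theorem le_mul_div_of_le_one_sub_mul_of_three_mul_le_mul {a c Δ R : ℝ} (ha : 0 ≤ a)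
    (hc : 0 ≤ c) (hac : 0 < 3 * a + c) (h₁ : R ≤ (1 - Δ) * a) (h₃ : 3 * R ≤ Δ * c) :
    R ≤ a * c / (3 * a + c) := by
  rw [le_div_iff₀ hac]
  nlinarith [mul_le_mul_of_nonneg_right h₁ hc, mul_le_mul_of_nonneg_right h₃ ha]

theorem exists_split_attaining_mul_div {a b c : ℝ} (ha : 0 < a) (hc : 0 ≤ c)
    (hca : c ≤ 3 * a) (hcb : 2 * c ≤ 3 * b) :
    ∃ Δ ∈ Set.Icc (0 : ℝ) 1,
      a * c / (3 * a + c) ≤ min Δ (1 - Δ) * a ∧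
      2 * (a * c / (3 * a + c)) ≤ Δ * b ∧
      3 * (a * c / (3 * a + c)) ≤ Δ * c := by
  have hD : 0 < 3 * a + c := by linarith
  have hcompl : 1 - 3 * a / (3 * a + c) = c / (3 * a + c) := by
    field_simp
    ring
  refine ⟨3 * a / (3 * a + c), ⟨by positivity, by rw [div_le_one hD]; linarith⟩, ?_, ?_, ?_⟩
  · have hmin : min (3 * a / (3 * a + c)) (c / (3 * a + c)) = c / (3 * a + c) :=
      min_eq_right (div_le_div_of_nonneg_right (by linarith) hD.le)
    rw [hcompl, hmin]
    exact le_of_eq (by ring)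
  · rw [div_mul_eq_mul_div, mul_div_assoc', div_le_div_iff_of_pos_right hD]
    linarith [mul_le_mul_of_nonneg_left hcb ha.le]
  · exact le_of_eq (by ring)

theorem logb_one_add_three_mul_le {β s : ℝ} (hβ : 1 < β) (hs : 0 ≤ s) :
    logb β (1 + 3 * s) ≤ 3 * logb β (1 + s) :=
  calc logb β (1 + 3 * s) ≤ logb β ((1 + s) ^ 3) :=
        logb_le_logb_of_le hβ (by positivity) (by nlinarith [pow_nonneg hs 3])
    _ = 3 * logb β (1 + s) := by rw [logb_pow]; norm_num

theorem two_mul_logb_one_add_three_mul_le {β s : ℝ} (hβ : 1 < β) (hs : 0 ≤ s) :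
    2 * logb β (1 + 3 * s) ≤ 3 * logb β (1 + 2 * s) :=
  calc 2 * logb β (1 + 3 * s) = logb β ((1 + 3 * s) ^ 2) := by rw [logb_pow]; norm_num
    _ ≤ logb β ((1 + 2 * s) ^ 3) :=
        logb_le_logb_of_le hβ (by positivity) (by nlinarith [pow_nonneg hs 3])
    _ = 3 * logb β (1 + 2 * s) := by rw [logb_pow]; norm_num

theorem stmt10 (s : ℝ) (hs : 0 < s) :
    let V := logb 2 (1 + s) * logb 2 (1 + 3 * s) /
      (3 * logb 2 (1 + s) + logb 2 (1 + 3 * s))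
    (∃ Δ₁ ∈ Set.Icc (0:ℝ) 1,
      V ≤ min Δ₁ (1 - Δ₁) * logb 2 (1 + s) ∧
      2 * V ≤ Δ₁ * logb 2 (1 + 2 * s) ∧
      3 * V ≤ Δ₁ * logb 2 (1 + 3 * s)) ∧
    ∀ Δ₁ ∈ Set.Icc (0:ℝ) 1, ∀ R : ℝ, 0 ≤ R →
      R ≤ min Δ₁ (1 - Δ₁) * logb 2 (1 + s) →
      2 * R ≤ Δ₁ * logb 2 (1 + 2 * s) →
      3 * R ≤ Δ₁ * logb 2 (1 + 3 * s) → R ≤ V := by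
  intro V
  have ha : 0 < logb 2 (1 + s) := logb_pos one_lt_two (by linarith)
  have hc : 0 < logb 2 (1 + 3 * s) := logb_pos one_lt_two (by linarith)
  refine ⟨exists_split_attaining_mul_div ha hc.le (logb_one_add_three_mul_le one_lt_two hs.le)
    (two_mul_logb_one_add_three_mul_le one_lt_two hs.le), ?_⟩
  intro Δ₁ _ R _ hmin _ h₃
  exact le_mul_div_of_le_one_sub_mul_of_three_mul_le_mul ha.le hc.le (by linarith)
    (hmin.trans (mul_le_mul_of_nonneg_right (min_le_right _ _) ha.le)) h₃
end

section
/- For all P, N > 0, the corresponding computation for the lateral receivers, which decode the mod-L sum of two codewords, gives optimal scaling γ* = 2P/(2P+N), equivalent noise power 2PN/(2P+N), and rate constraint R < Δ₁·log₂(1/2 + SNR); moreover log₂(1/3+SNR) ≤ log₂(1/2+SNR), so the relay constraint is the binding phase-1 constraint. -/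
open Real

theorem stmt17 (P N : ℝ) (hP : 0 < P) (hN : 0 < N) :
    (∀ γ : ℝ, 2 * P * N / (2 * P + N) ≤ γ ^ 2 * N + 2 * P * (1 - γ) ^ 2) ∧
    (2 * P / (2 * P + N)) ^ 2 * N + 2 * P * (1 - 2 * P / (2 * P + N)) ^ 2 =
      2 * P * N / (2 * P + N) ∧
    P / (2 * P * N / (2 * P + N)) = 1 / 2 + P / N ∧
    logb 2 (1 / 3 + P / N) ≤ logb 2 (1 / 2 + P / N) := by
  have hD : 0 < 2 * P + N := by linarith
  refine ⟨fun γ => ?_, ?_, ?_, ?_⟩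
  · rw [div_le_iff₀ hD]
    nlinarith [sq_nonneg (γ * (2 * P + N) - 2 * P), sq_nonneg γ]
  · field_simp
    ring
  · field_simp
    ring
  · have hpn : 0 < P / N := div_pos hP hN
    gcongr
    · norm_num
    · linarith
end
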